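/- Let h₁, h₂ be lower unitriangular matrices over ℤ[v,v⁻¹] indexed by finite posets, each satisfying \bar{h_i} = h_i⁻¹, and let d_i be the unique lower unitriangular matrices with off-diagonal entries in v⁻¹ℤ[v⁻¹] satisfying d_i = \bar{d_i} h_i. Then the Kronecker product d₁ ⊗ d₂ is the unique lower unitriangular matrix with off-diagonal entries in v⁻¹ℤ[v⁻¹] satisfying d₁ ⊗ d₂ = \overline{d₁ ⊗ d₂} (h₁ ⊗ h₂). -/

import Mathlib

open LaurentPolynomial

/-- The ring `ℤ[v,v⁻¹]` of Laurent polynomials with integer coefficients. -/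
abbrev L : Type := LaurentPolynomial ℤ

/-- The bar involution `v ↦ v⁻¹` applied entrywise to a matrix. -/
noncomputable def barMat {ι : Type*} (m : Matrix ι ι L) : Matrix ι ι L :=
  fun i j => invert (m i j)

/-- A matrix indexed by a poset is lower unitriangular if its diagonal entries are `1`
and the `(x,y)` entry vanishes unless `y ≤ x`. -/
def Unitri {ι : Type*} [PartialOrder ι] (m : Matrix ι ι L) : Prop :=
  (∀ i, m i i = 1) ∧ ∀ i j, ¬ j ≤ i → m i j = 0

/-- A Laurent polynomial lies in `v⁻¹ℤ[v⁻¹]`, i.e. is supported on negative exponents. -/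
def NegPow (p : L) : Prop := ∀ k : ℤ, 0 ≤ k → AddMonoidAlgebra.coeff p k = 0

/-- The Kronecker product of matrices indexed by posets `S` and `T`, indexed by `S × T`
with the product order. -/
noncomputable def kron {S T : Type*} (a : Matrix S S L) (b : Matrix T T L) : Matrix (S × T) (S × T) L :=
  fun p q => a p.1 q.1 * b p.2 q.2

/-!
The bar involution is a ring automorphism of `ℤ[v,v⁻¹]`, so it commutes with matrix and Kronecker
products, and `(d₁ ⊗ d₂)‾ (h₁ ⊗ h₂) = (d̄₁ h₁) ⊗ (d̄₂ h₂) = d₁ ⊗ d₂`. An off-diagonal entry of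
`d₁ ⊗ d₂` is a product of an element of `v⁻¹ℤ[v⁻¹]` with one of `ℤ[v⁻¹]`, hence lies in
`v⁻¹ℤ[v⁻¹]`. For uniqueness, the difference `f` of two solutions satisfies `f = f̄ h` and has all
entries in `v⁻¹ℤ[v⁻¹]`. Treating the columns from the top of the order down, unitriangularity of
`h` reduces the `(p,q)` entry of `f̄ h` to `f̄_{pq}`, so `f_{pq}` is bar-invariant and therefore `0`.
-/

lemma kron_eq_kronecker {S T : Type*} (a : Matrix S S L) (b : Matrix T T L) :
    kron a b = Matrix.kronecker a b :=
  rfl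

lemma barMat_eq_map {ι : Type*} (m : Matrix ι ι L) : barMat m = m.map invert :=
  rfl

lemma barMat_mul {ι : Type*} [Fintype ι] (a b : Matrix ι ι L) :
    barMat (a * b) = barMat a * barMat b := by
  simp only [barMat_eq_map]
  exact Matrix.map_mul (f := (invert : L ≃ₐ[ℤ] L).toRingHom)

lemma barMat_sub {ι : Type*} (a b : Matrix ι ι L) : barMat (a - b) = barMat a - barMat b :=
  Matrix.map_sub invert (map_sub invert) a b

lemma barMat_kron {S T : Type*} (a : Matrix S S L) (b : Matrix T T L) :
    barMat (kron a b) = kron (barMat a) (barMat b) :=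
  Matrix.ext fun p q => map_mul invert (a p.1 q.1) (b p.2 q.2)

lemma kron_mul_kron {S T : Type*} [Fintype S] [Fintype T] (a c : Matrix S S L)
    (b d : Matrix T T L) : kron a b * kron c d = kron (a * c) (b * d) := by
  simp only [kron_eq_kronecker]
  exact (Matrix.mul_kronecker_mul a c b d).symm

lemma unitri_kron {S T : Type*} [PartialOrder S] [PartialOrder T]
    {a : Matrix S S L} {b : Matrix T T L} (ha : Unitri a) (hb : Unitri b) :
    Unitri (kron a b) := by
  refine ⟨fun p => by simp [kron, ha.1, hb.1], fun p q hpq => ?_⟩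
  rcases not_and_or.mp (Prod.le_def.not.mp hpq) with h | h
  · simp [kron, ha.2 _ _ h]
  · simp [kron, hb.2 _ _ h]

lemma NegPow.zero : NegPow 0 := fun _ _ => rfl

lemma NegPow.sub {a b : L} (ha : NegPow a) (hb : NegPow b) : NegPow (a - b) := by
  intro k hk
  rw [AddMonoidAlgebra.coeff_sub, Finsupp.sub_apply, ha k hk, hb k hk, sub_zero]

lemma NegPow.eq_zero_of_invert_eq {p : L} (hp : NegPow p) (hinv : invert p = p) : p = 0 := by
  ext k
  rcases le_or_gt 0 k with hk | hk
  · exact hp k hk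
  · rw [← hinv, invert_apply]
    exact hp (-k) (by omega)

lemma NegPow.mul {a b : L} (ha : NegPow a) (hb : ∀ k : ℤ, 0 < k → b.coeff k = 0) :
    NegPow (a * b) := by
  intro k hk
  by_contra hne
  obtain ⟨i, hi, j, hj, rfl⟩ := Finset.mem_add.mp
    (AddMonoidAlgebra.support_coeff_mul_subset a b (Finsupp.mem_support_iff.mpr hne))
  have hi : i < 0 := not_le.mp fun h => Finsupp.mem_support_iff.mp hi (ha i h)
  have hj : j ≤ 0 := not_lt.mp fun h => Finsupp.mem_support_iff.mp hj (hb j h)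
  omega

lemma Unitri.coeff_eq_zero_of_pos {ι : Type*} [PartialOrder ι] {m : Matrix ι ι L}
    (hU : Unitri m) (hN : ∀ i j, i ≠ j → NegPow (m i j)) (i j : ι) {k : ℤ} (hk : 0 < k) :
    (m i j).coeff k = 0 := by
  obtain rfl | hij := eq_or_ne i j
  · rw [hU.1 i]
    exact Finsupp.single_eq_of_ne (by omega)
  · exact hN i j hij k hk.le

lemma negPow_kron_apply_of_ne {S T : Type*} [PartialOrder S] [PartialOrder T]
    {a : Matrix S S L} {b : Matrix T T L} (ha : Unitri a) (hb : Unitri b)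
    (haN : ∀ i j, i ≠ j → NegPow (a i j)) (hbN : ∀ i j, i ≠ j → NegPow (b i j))
    {p q : S × T} (hpq : p ≠ q) : NegPow (kron a b p q) := by
  by_cases h₁ : p.1 = q.1
  · have h₂ : p.2 ≠ q.2 := fun h₂ => hpq (Prod.ext h₁ h₂)
    rw [kron, mul_comm]
    exact (hbN _ _ h₂).mul fun _ => ha.coeff_eq_zero_of_pos haN _ _
  · exact (haN _ _ h₁).mul fun _ => hb.coeff_eq_zero_of_pos hbN _ _

lemma mul_unitri_apply_of_forall_lt_eq_zero {ι : Type*} [Fintype ι] [PartialOrder ι]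
    {m H : Matrix ι ι L} (hH : Unitri H) {p q : ι} (hm : ∀ r, q < r → m p r = 0) :
    (m * H) p q = m p q := by
  rw [Matrix.mul_apply, Finset.sum_eq_single_of_mem q (Finset.mem_univ q), hH.1, mul_one]
  intro r _ hrq
  by_cases hqr : q ≤ r
  · rw [hm r (lt_of_le_of_ne hqr (Ne.symm hrq)), zero_mul]
  · rw [hH.2 r q hqr, mul_zero]

lemma eq_zero_of_eq_barMat_mul {ι : Type*} [Fintype ι] [PartialOrder ι] {f H : Matrix ι ι L}
    (hH : Unitri H) (hN : ∀ i j, NegPow (f i j)) (hf : f = barMat f * H) : f = 0 := by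
  suffices hcol : ∀ q p, f p q = 0 from Matrix.ext fun p q => hcol q p
  intro q
  induction q using WellFoundedGT.induction with
  | ind q ih =>
    intro p
    have hbar : ∀ r, q < r → barMat f p r = 0 := fun r hqr => by
      rw [barMat, ih r hqr p, map_zero]
    have hinv : invert (f p q) = f p q := by
      conv_rhs => rw [hf, mul_unitri_apply_of_forall_lt_eq_zero hH hbar]
      rfl
    exact (hN p q).eq_zero_of_invert_eq hinv

def IsBarSolution {ι : Type*} [Fintype ι] [PartialOrder ι] (h d : Matrix ι ι L) : Prop :=
  Unitri d ∧ (∀ i j, i ≠ j → NegPow (d i j)) ∧ d = barMat d * h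

lemma IsBarSolution.unique {ι : Type*} [Fintype ι] [PartialOrder ι] {H d d' : Matrix ι ι L}
    (hH : Unitri H) (hd : IsBarSolution H d) (hd' : IsBarSolution H d') :
    d = d' := by
  obtain ⟨hU, hN, hE⟩ := hd
  obtain ⟨hU', hN', hE'⟩ := hd'
  have hdiff : d - d' = barMat (d - d') * H := by
    rw [barMat_sub, Matrix.sub_mul, ← hE, ← hE']
  refine sub_eq_zero.mp (eq_zero_of_eq_barMat_mul hH (fun i j => ?_) hdiff)
  obtain rfl | hij := eq_or_ne i j
  · rw [Matrix.sub_apply, hU.1, hU'.1, sub_self]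
    exact NegPow.zero
  · exact (hN i j hij).sub (hN' i j hij)

lemma IsBarSolution.kron {S T : Type*} [Fintype S] [PartialOrder S] [Fintype T] [PartialOrder T]
    {h₁ d₁ : Matrix S S L} {h₂ d₂ : Matrix T T L}
    (hd₁ : IsBarSolution h₁ d₁) (hd₂ : IsBarSolution h₂ d₂) :
    IsBarSolution (kron h₁ h₂) (kron d₁ d₂) := by
  obtain ⟨hU₁, hN₁, hE₁⟩ := hd₁
  obtain ⟨hU₂, hN₂, hE₂⟩ := hd₂
  refine ⟨unitri_kron hU₁ hU₂, fun p q => negPow_kron_apply_of_ne hU₁ hU₂ hN₁ hN₂, ?_⟩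
  rw [barMat_kron, kron_mul_kron, ← hE₁, ← hE₂]

theorem kron_of_bar_invariant_solutions_general {S T : Type*}
    [Fintype S] [PartialOrder S]
    [Fintype T] [PartialOrder T]
    (h₁ : Matrix S S L) (h₂ : Matrix T T L) (d₁ : Matrix S S L) (d₂ : Matrix T T L)
    (hU₁ : Unitri h₁) (hU₂ : Unitri h₂)
    (dU₁ : Unitri d₁) (dU₂ : Unitri d₂)
    (dN₁ : ∀ i j, i ≠ j → NegPow (d₁ i j)) (dN₂ : ∀ i j, i ≠ j → NegPow (d₂ i j))
    (dE₁ : d₁ = barMat d₁ * h₁) (dE₂ : d₂ = barMat d₂ * h₂) :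
    (Unitri (kron d₁ d₂) ∧ (∀ p q : S × T, p ≠ q → NegPow (kron d₁ d₂ p q)) ∧
        kron d₁ d₂ = barMat (kron d₁ d₂) * kron h₁ h₂) ∧
      ∀ d : Matrix (S × T) (S × T) L,
        Unitri d → (∀ p q, p ≠ q → NegPow (d p q)) → d = barMat d * kron h₁ h₂ →
          d = kron d₁ d₂ := by
  have hkron : IsBarSolution (kron h₁ h₂) (kron d₁ d₂) :=
    IsBarSolution.kron ⟨dU₁, dN₁, dE₁⟩ ⟨dU₂, dN₂, dE₂⟩
  exact ⟨hkron, fun d hU hN hE => IsBarSolution.unique (unitri_kron hU₁ hU₂) ⟨hU, hN, hE⟩ hkron⟩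

/-- If `h₁, h₂` are lower unitriangular with `h̄ᵢ = hᵢ⁻¹` and `dᵢ` are the (unique) lower
unitriangular matrices with off-diagonal entries in `v⁻¹ℤ[v⁻¹]` satisfying `dᵢ = d̄ᵢ hᵢ`,
then `d₁ ⊗ d₂` is the unique lower unitriangular matrix with off-diagonal entries in
`v⁻¹ℤ[v⁻¹]` satisfying `d₁ ⊗ d₂ = (d₁ ⊗ d₂)‾ (h₁ ⊗ h₂)`. -/
theorem kron_of_bar_invariant_solutions {S T : Type*}
    [Fintype S] [DecidableEq S] [PartialOrder S]
    [Fintype T] [DecidableEq T] [PartialOrder T]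
    (h₁ : Matrix S S L) (h₂ : Matrix T T L) (d₁ : Matrix S S L) (d₂ : Matrix T T L)
    (hU₁ : Unitri h₁) (hU₂ : Unitri h₂)
    (hB₁ : barMat h₁ * h₁ = 1) (hB₂ : barMat h₂ * h₂ = 1)
    (dU₁ : Unitri d₁) (dU₂ : Unitri d₂)
    (dN₁ : ∀ i j, i ≠ j → NegPow (d₁ i j)) (dN₂ : ∀ i j, i ≠ j → NegPow (d₂ i j))
    (dE₁ : d₁ = barMat d₁ * h₁) (dE₂ : d₂ = barMat d₂ * h₂) :
    (Unitri (kron d₁ d₂) ∧ (∀ p q : S × T, p ≠ q → NegPow (kron d₁ d₂ p q)) ∧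
        kron d₁ d₂ = barMat (kron d₁ d₂) * kron h₁ h₂) ∧
      ∀ d : Matrix (S × T) (S × T) L,
        Unitri d → (∀ p q, p ≠ q → NegPow (d p q)) → d = barMat d * kron h₁ h₂ →
          d = kron d₁ d₂ :=
  kron_of_bar_invariant_solutions_general h₁ h₂ d₁ d₂ hU₁ hU₂ dU₁ dU₂ dN₁ dN₂ dE₁ dE₂
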